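/- arXiv:2507.21366 — 3 statements merged into one kernel-verified Lean document; each statement's English description precedes it below -/
import Mathlib

section
/- If F is a filter on a topological space X such that every member of F is somewhere dense, and A ⊆ X is any set, then either the filter generated by F ∪ {A} or the filter generated by F ∪ {X \ A} has the property that every member is somewhere dense. -/
/-- A set is *somewhere dense* if it is dense in some non-empty open set. -/
def SomewhereDense {X : Type*} [TopologicalSpace X] (A : Set X) : Prop :=
  ∃ U : Set X, IsOpen U ∧ U.Nonempty ∧ U ⊆ closure A

lemma somewhereDense_mono {X : Type*} [TopologicalSpace X] {A B : Set X}
    (h : A ⊆ B) (hA : SomewhereDense A) : SomewhereDense B := by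
  obtain ⟨U, hU, hne, hsub⟩ := hA
  exact ⟨U, hU, hne, hsub.trans (closure_mono h)⟩

lemma not_somewhereDense_iff {X : Type*} [TopologicalSpace X] (A : Set X) :
    ¬ SomewhereDense A ↔ interior (closure A) = ∅ := by
  constructor
  · intro h
    by_contra hne
    exact h ⟨interior (closure A), isOpen_interior,
      Set.nonempty_iff_ne_empty.2 hne, interior_subset⟩
  · rintro h ⟨U, hU, hne, hsub⟩
    have : U ⊆ interior (closure A) := hU.subset_interior_iff.2 hsub
    rw [h] at this
    exact hne.ne_empty (Set.subset_empty_iff.1 this)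

/-- If every member of the filter `F` is somewhere dense, then for any set `A`,
either the filter generated by `F ∪ {A}` or the filter generated by `F ∪ {Aᶜ}`
has all of its members somewhere dense. -/
theorem stmt_1 {X : Type*} [TopologicalSpace X] (F : Filter X)
    (hF : ∀ B ∈ F, SomewhereDense B) (A : Set X) :
    (∀ S ∈ F ⊓ Filter.principal A, SomewhereDense S) ∨
    (∀ S ∈ F ⊓ Filter.principal Aᶜ, SomewhereDense S) := by
  by_contra h
  push_neg at h
  obtain ⟨⟨S₁, hS₁, hS₁nd⟩, ⟨S₂, hS₂, hS₂nd⟩⟩ := h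
  rw [Filter.mem_inf_principal] at hS₁ hS₂
  -- hS₁ : {x | x ∈ A → x ∈ S₁} ∈ F
  set B₁ : Set X := {x | x ∈ A → x ∈ S₁}
  set B₂ : Set X := {x | x ∈ Aᶜ → x ∈ S₂}
  have hB : B₁ ∩ B₂ ∈ F := F.inter_mem hS₁ hS₂
  have hsub : B₁ ∩ B₂ ⊆ S₁ ∪ S₂ := by
    rintro x ⟨h1, h2⟩
    by_cases hx : x ∈ A
    · exact Or.inl (h1 hx)
    · exact Or.inr (h2 hx)
  have hsd : SomewhereDense (S₁ ∪ S₂) := somewhereDense_mono hsub (hF _ hB)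
  -- show S₁ ∪ S₂ is nowhere dense
  rw [not_somewhereDense_iff] at hS₁nd hS₂nd
  obtain ⟨U, hU, hne, hUsub⟩ := hsd
  rw [closure_union] at hUsub
  have h1 : U \ closure S₁ ⊆ interior (closure S₂) := by
    apply (hU.sdiff isClosed_closure).subset_interior_iff.2
    intro x hx
    rcases hUsub hx.1 with h | h
    · exact absurd h hx.2
    · exact h
  rw [hS₂nd, Set.subset_empty_iff, Set.diff_eq_empty] at h1
  have h2 : U ⊆ interior (closure S₁) := hU.subset_interior_iff.2 h1
  rw [hS₁nd, Set.subset_empty_iff] at h2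
  exact hne.ne_empty h2
end

section
/- For every d < ω, the graph on vertex set (2²)^d whose edges are the two-element up-1-combs is a cograph. -/
/-- The index square `2²`. -/
abbrev Sq : Type := Fin 2 × Fin 2

/-- `{σ, τ}` is an up-1-comb: at the end of the longest common prefix the two
sequences have the same first coordinate and different second coordinates. -/
def UpPair {d : ℕ} (σ τ : Fin d → Sq) : Prop :=
  ∃ t : Fin d, (∀ s, s < t → σ s = τ s) ∧ (σ t).1 = (τ t).1 ∧ (σ t).2 ≠ (τ t).2

/-- Auxiliary relation for the disjoint union of two graphs. -/
def sumRel {V W : Type} (G : SimpleGraph V) (H : SimpleGraph W) : V ⊕ W → V ⊕ W → Prop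
  | .inl v, .inl v' => G.Adj v v'
  | .inr w, .inr w' => H.Adj w w'
  | _, _ => False

/-- Disjoint union (coproduct) of two simple graphs. -/
def sumGraph {V W : Type} (G : SimpleGraph V) (H : SimpleGraph W) : SimpleGraph (V ⊕ W) :=
  SimpleGraph.fromRel (sumRel G H)

/-- Auxiliary relation for the join of two graphs. -/
def joinRel {V W : Type} (G : SimpleGraph V) (H : SimpleGraph W) : V ⊕ W → V ⊕ W → Prop
  | .inl v, .inl v' => G.Adj v v'
  | .inr w, .inr w' => H.Adj w w'
  | _, _ => True

/-- Graph join of two simple graphs: disjoint union plus all cross edges. -/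
def joinGraph {V W : Type} (G : SimpleGraph V) (H : SimpleGraph W) : SimpleGraph (V ⊕ W) :=
  SimpleGraph.fromRel (joinRel G H)

/-- Cographs: the smallest class of graphs (up to isomorphism) containing the
one-vertex graph and closed under disjoint unions and graph joins. -/
inductive IsCograph : {V : Type} → SimpleGraph V → Prop
  | single : IsCograph (⊥ : SimpleGraph PUnit)
  | iso {V W : Type} {G : SimpleGraph V} {H : SimpleGraph W} (e : G ≃g H) :
      IsCograph G → IsCograph H
  | coprod {V W : Type} {G : SimpleGraph V} {H : SimpleGraph W} :
      IsCograph G → IsCograph H → IsCograph (sumGraph G H)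
  | join {V W : Type} {G : SimpleGraph V} {H : SimpleGraph W} :
      IsCograph G → IsCograph H → IsCograph (joinGraph G H)

/-!
Write a sequence in `(2²)^(d+1)` as a first letter `s ∈ 2²` followed by a tail in `(2²)^d`. Two
sequences form an up-1-comb iff either their first letters agree in the first coordinate and
differ in the second, or their first letters are equal and their tails form an up-1-comb. So the
comb graph in dimension `d + 1` is the lexicographic product `K[G_d]` of the graph `K = ⊥[⊤]` on
`2 × 2` (two disjoint edges) with the comb graph `G_d` in dimension `d`, and cographs are closed
under lexicographic products: substituting a cograph for every vertex of a cograph commutes with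
disjoint unions and joins.
-/

namespace SimpleGraph

variable {U V W : Type*}

def lexProd (G : SimpleGraph V) (H : SimpleGraph W) : SimpleGraph (V × W) where
  Adj p q := G.Adj p.1 q.1 ∨ p.1 = q.1 ∧ H.Adj p.2 q.2
  symm.symm p q := by simp [eq_comm, adj_comm]

@[simp]
lemma lexProd_adj {G : SimpleGraph V} {H : SimpleGraph W} {p q : V × W} :
    (lexProd G H).Adj p q ↔ G.Adj p.1 q.1 ∨ p.1 = q.1 ∧ H.Adj p.2 q.2 :=
  Iff.rfl

def Iso.lexProdCongrLeft {G : SimpleGraph U} {G' : SimpleGraph V} (e : G ≃g G')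
    (H : SimpleGraph W) : lexProd G H ≃g lexProd G' H where
  toEquiv := e.toEquiv.prodCongr (Equiv.refl W)
  map_rel_iff' := by simp [e.map_adj_iff]

end SimpleGraph

open SimpleGraph

section Cograph

variable {U V W : Type}

@[simp]
lemma sumGraph_adj {G : SimpleGraph V} {H : SimpleGraph W} {p q : V ⊕ W} :
    (sumGraph G H).Adj p q ↔ sumRel G H p q := by
  rcases p with v | w <;> rcases q with v' | w' <;>
    simp +contextual [sumGraph, sumRel, G.adj_comm, H.adj_comm, G.ne_of_adj, H.ne_of_adj]

@[simp]
lemma joinGraph_adj {G : SimpleGraph V} {H : SimpleGraph W} {p q : V ⊕ W} :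
    (joinGraph G H).Adj p q ↔ joinRel G H p q := by
  rcases p with v | w <;> rcases q with v' | w' <;>
    simp +contextual [joinGraph, joinRel, G.adj_comm, H.adj_comm, G.ne_of_adj, H.ne_of_adj]

def SimpleGraph.Iso.punitLexProd (H : SimpleGraph W) :
    lexProd (⊥ : SimpleGraph PUnit) H ≃g H where
  toEquiv := Equiv.punitProd W
  map_rel_iff' := by simp

def SimpleGraph.Iso.sumGraphLexProdDistrib (G₁ : SimpleGraph U) (G₂ : SimpleGraph V)
    (H : SimpleGraph W) :
    lexProd (sumGraph G₁ G₂) H ≃g sumGraph (lexProd G₁ H) (lexProd G₂ H) where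
  toEquiv := Equiv.sumProdDistrib U V W
  map_rel_iff' := by
    rintro ⟨a | a, x⟩ ⟨b | b, y⟩ <;> simp [sumRel]

def SimpleGraph.Iso.joinGraphLexProdDistrib (G₁ : SimpleGraph U) (G₂ : SimpleGraph V)
    (H : SimpleGraph W) :
    lexProd (joinGraph G₁ G₂) H ≃g joinGraph (lexProd G₁ H) (lexProd G₂ H) where
  toEquiv := Equiv.sumProdDistrib U V W
  map_rel_iff' := by
    rintro ⟨a | a, x⟩ ⟨b | b, y⟩ <;> simp [joinRel]

theorem IsCograph.lexProd {G : SimpleGraph V} {H : SimpleGraph W} (hG : IsCograph G)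
    (hH : IsCograph H) : IsCograph (lexProd G H) := by
  induction hG with
  | single => exact hH.iso (Iso.punitLexProd H).symm
  | iso e _ ih => exact ih.iso (Iso.lexProdCongrLeft e H)
  | coprod _ _ ih₁ ih₂ => exact (ih₁.coprod ih₂).iso (Iso.sumGraphLexProdDistrib _ _ H).symm
  | join _ _ ih₁ ih₂ => exact (ih₁.join ih₂).iso (Iso.joinGraphLexProdDistrib _ _ H).symm

lemma IsCograph.of_unique [Unique V] (G : SimpleGraph V) : IsCograph G :=
  IsCograph.single.iso ⟨Equiv.ofUnique PUnit V, by simp [Subsingleton.elim _ (default : V)]⟩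

lemma isCograph_bot_fin_two : IsCograph (⊥ : SimpleGraph (Fin 2)) :=
  (IsCograph.single.coprod IsCograph.single).iso
    ⟨Equiv.boolEquivPUnitSumPUnit.symm.trans finTwoEquiv.symm, by
      rintro (_ | _) (_ | _) <;> simp [sumRel]⟩

lemma isCograph_top_fin_two : IsCograph (⊤ : SimpleGraph (Fin 2)) :=
  (IsCograph.single.join IsCograph.single).iso
    ⟨Equiv.boolEquivPUnitSumPUnit.symm.trans finTwoEquiv.symm, by
      rintro (_ | _) (_ | _) <;> simp [joinRel]⟩

end Cograph

section UpPair

variable {d : ℕ}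

lemma upPair_symm {σ τ : Fin d → Sq} (h : UpPair σ τ) : UpPair τ σ := by
  obtain ⟨t, hpre, h₁, h₂⟩ := h
  exact ⟨t, fun s hs => (hpre s hs).symm, h₁.symm, h₂.symm⟩

lemma fromRel_upPair_adj {σ τ : Fin d → Sq} :
    (fromRel (fun σ τ : Fin d → Sq => UpPair σ τ)).Adj σ τ ↔ UpPair σ τ := by
  refine ⟨fun ⟨_, h⟩ => h.elim id upPair_symm, fun h => ⟨?_, Or.inl h⟩⟩
  rintro rfl
  obtain ⟨t, -, -, h⟩ := h
  exact h rfl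

lemma upPair_cons {s t : Sq} {σ τ : Fin d → Sq} :
    UpPair (Fin.cons s σ : Fin (d + 1) → Sq) (Fin.cons t τ) ↔
      s.1 = t.1 ∧ s.2 ≠ t.2 ∨ s = t ∧ UpPair σ τ := by
  constructor
  · rintro ⟨u, hpre, h₁, h₂⟩
    induction u using Fin.cases with
    | zero => exact Or.inl ⟨by simpa using h₁, by simpa using h₂⟩
    | succ u =>
      refine Or.inr ⟨by simpa using hpre 0 u.succ_pos, u, fun v hv => ?_, by simpa using h₁,
        by simpa using h₂⟩
      simpa using hpre v.succ (Fin.succ_lt_succ_iff.mpr hv)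
  · rintro (⟨h₁, h₂⟩ | ⟨rfl, u, hpre, h₁, h₂⟩)
    · exact ⟨0, fun v hv => absurd hv (Fin.not_lt_zero v), by simpa using h₁,
        by simpa using h₂⟩
    · refine ⟨u.succ, fun v hv => ?_, by simpa using h₁, by simpa using h₂⟩
      induction v using Fin.cases with
      | zero => rfl
      | succ v => simpa using hpre v (Fin.succ_lt_succ_iff.mp hv)

def SimpleGraph.Iso.lexProdUpPairGraph (d : ℕ) :
    lexProd (lexProd (⊥ : SimpleGraph (Fin 2)) (⊤ : SimpleGraph (Fin 2)))
        (fromRel (fun σ τ : Fin d → Sq => UpPair σ τ)) ≃g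
      fromRel (fun σ τ : Fin (d + 1) → Sq => UpPair σ τ) where
  toEquiv := Fin.consEquiv fun _ => Sq
  map_rel_iff' := by
    rintro ⟨s, σ⟩ ⟨t, τ⟩
    change (fromRel _).Adj (Fin.cons s σ : Fin (d + 1) → Sq) (Fin.cons t τ) ↔ _
    rw [fromRel_upPair_adj, upPair_cons, lexProd_adj, fromRel_upPair_adj]
    simp [Prod.ext_iff]

end UpPair

/-- For every `d`, the graph on `(2²)^d` whose edges are the two-element
up-1-combs is a cograph. -/
theorem stmt_4 (d : ℕ) :
    IsCograph (SimpleGraph.fromRel (fun σ τ : Fin d → Sq => UpPair σ τ)) := by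
  induction d with
  | zero => exact IsCograph.of_unique _
  | succ d ih =>
    exact ((isCograph_bot_fin_two.lexProd isCograph_top_fin_two).lexProd ih).iso
      (Iso.lexProdUpPairGraph d)
end

section
/- For every d < ω, there is a map f : (2²)^d → ℤ² such that the image of any up-ω-comb in (2²)^d is an antichain in ℤ² (with the product partial order), and the image of any right-ω-comb is a strict chain in ℤ². -/
/-- `α` extends the partial function `τ` (defined on `{s | s < t}`) followed by the
value `v` at `t`. -/
def ExtendsAt {d : ℕ} (α : Fin d → Sq) (t : Fin d) (τ : Fin d → Sq) (v : Sq) : Prop :=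
  (∀ s, s < t → α s = τ s) ∧ α t = v

/-- `A` is narrowly below `B`. -/
def NarrowlyBelow {d : ℕ} (A B : Set (Fin d → Sq)) : Prop :=
  ∃ (t : Fin d) (τ : Fin d → Sq) (i : Fin 2),
    (∀ α ∈ A, ExtendsAt α t τ (i, 0)) ∧ (∀ β ∈ B, ExtendsAt β t τ (i, 1))

/-- `A` is narrowly to the left of `B`. -/
def NarrowlyLeft {d : ℕ} (A B : Set (Fin d → Sq)) : Prop :=
  ∃ (t : Fin d) (τ : Fin d → Sq) (j : Fin 2),
    (∀ α ∈ A, ExtendsAt α t τ (0, j)) ∧ (∀ β ∈ B, ExtendsAt β t τ (1, j))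

/-- Finite up-ω-combs: the smallest class containing singletons and closed under
unions `A ∪ B` with `A` narrowly below `B`. -/
inductive FinUpComb {d : ℕ} : Set (Fin d → Sq) → Prop
  | single (α : Fin d → Sq) : FinUpComb {α}
  | union {A B : Set (Fin d → Sq)} : FinUpComb A → FinUpComb B →
      NarrowlyBelow A B → FinUpComb (A ∪ B)

/-- Finite right-ω-combs. -/
inductive FinRightComb {d : ℕ} : Set (Fin d → Sq) → Prop
  | single (α : Fin d → Sq) : FinRightComb {α}
  | union {A B : Set (Fin d → Sq)} : FinRightComb A → FinRightComb B →
      NarrowlyLeft A B → FinRightComb (A ∪ B)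

/-- Up-ω-combs: every non-empty finite subset is a finite up-ω-comb. -/
def UpComb {d : ℕ} (C : Set (Fin d → Sq)) : Prop :=
  ∀ A ⊆ C, A.Finite → A.Nonempty → FinUpComb A

/-- Right-ω-combs. -/
def RightComb {d : ℕ} (C : Set (Fin d → Sq)) : Prop :=
  ∀ A ⊆ C, A.Finite → A.Nonempty → FinRightComb A

lemma geom3 : ∀ n : ℕ, ∑ s ∈ Finset.range n, (3:ℤ) * 4^(n-1-s) = 4^n - 1 := by
  intro n
  induction n with
  | zero => simp
  | succ n ih =>
    rw [Finset.sum_range_succ']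
    have h1 : ∀ i ∈ Finset.range n, (3:ℤ) * 4^(n+1-1-(i+1)) = 3 * 4^(n-1-i) := by
      intro i _; congr 2; omega
    rw [Finset.sum_congr rfl h1, ih]
    have : n + 1 - 1 - 0 = n := by omega
    rw [this]
    ring

lemma pos_sum (d t : ℕ) (ht : t < d) (D : ℕ → ℤ) (h0 : ∀ s < t, D s = 0)
    (h1 : 1 ≤ D t) (h2 : ∀ s, -3 ≤ D s) :
    0 < ∑ s ∈ Finset.range d, D s * 4^(d-1-s) := by
  rw [← Finset.sum_range_add_sum_Ico _ (Nat.succ_le_of_lt ht)]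
  rw [Finset.sum_range_succ]
  have hz : ∑ s ∈ Finset.range t, D s * 4^(d-1-s) = 0 :=
    Finset.sum_eq_zero fun s hs => by rw [h0 s (Finset.mem_range.mp hs)]; ring
  rw [hz, zero_add]
  have hb : ∀ s ∈ Finset.Ico (t+1) d, -((3:ℤ) * 4^(d-1-s)) ≤ D s * 4^(d-1-s) := by
    intro s _
    have := mul_le_mul_of_nonneg_right (h2 s) (pow_nonneg (by norm_num) (d-1-s) : (0:ℤ) ≤ 4^(d-1-s))
    linarith
  have hsum : -∑ s ∈ Finset.Ico (t+1) d, (3:ℤ) * 4^(d-1-s) ≤ ∑ s ∈ Finset.Ico (t+1) d, D s * 4^(d-1-s) := by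
    rw [← Finset.sum_neg_distrib]
    exact Finset.sum_le_sum hb
  have hg : ∑ s ∈ Finset.Ico (t+1) d, (3:ℤ) * 4^(d-1-s) = 4^(d-1-t) - 1 := by
    rw [Finset.sum_Ico_eq_sum_range]
    have h1 : ∀ i ∈ Finset.range (d-(t+1)), (3:ℤ) * 4^(d-1-(t+1+i)) = 3 * 4^((d-(t+1))-1-i) := by
      intro i _; congr 2; omega
    rw [Finset.sum_congr rfl h1, geom3]
    congr 2; omega
  have hDt : (4:ℤ)^(d-1-t) ≤ D t * 4^(d-1-t) := by
    have := mul_le_mul_of_nonneg_right h1 (pow_nonneg (by norm_num) (d-1-t) : (0:ℤ) ≤ 4^(d-1-t))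
    linarith
  rw [hg] at hsum
  linarith

/-- Weighted digit sum over `Fin d`. -/
def dsum {d : ℕ} (g : Fin d → ℤ) : ℤ := ∑ i : Fin d, g i * 4^(d-1-(i:ℕ))

lemma dsum_lt {d : ℕ} (g h : Fin d → ℤ) (t : Fin d)
    (h0 : ∀ s, s < t → g s = h s) (h1 : h t + 1 ≤ g t)
    (h2 : ∀ s, h s - 3 ≤ g s) : dsum h < dsum g := by
  set G : ℕ → ℤ := fun s => if hs : s < d then g ⟨s, hs⟩ else 0 with hG
  set H : ℕ → ℤ := fun s => if hs : s < d then h ⟨s, hs⟩ else 0 with hH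
  have hg : dsum g = ∑ s ∈ Finset.range d, G s * 4^(d-1-s) := by
    rw [dsum, show (∑ i : Fin d, g i * 4^(d-1-(i:ℕ)))
        = ∑ i : Fin d, G (i:ℕ) * 4^(d-1-(i:ℕ)) from
      Finset.sum_congr rfl (fun i _ => by simp [hG, i.isLt])]
    exact Fin.sum_univ_eq_sum_range (fun s => G s * 4^(d-1-s)) d
  have hh : dsum h = ∑ s ∈ Finset.range d, H s * 4^(d-1-s) := by
    rw [dsum, show (∑ i : Fin d, h i * 4^(d-1-(i:ℕ)))
        = ∑ i : Fin d, H (i:ℕ) * 4^(d-1-(i:ℕ)) from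
      Finset.sum_congr rfl (fun i _ => by simp [hH, i.isLt])]
    exact Fin.sum_univ_eq_sum_range (fun s => H s * 4^(d-1-s)) d
  have key : 0 < ∑ s ∈ Finset.range d, (G s - H s) * 4^(d-1-s) := by
    apply pos_sum d t.val t.isLt
    · intro s hs
      have hsd : s < d := lt_trans hs t.isLt
      simp only [hG, hH, dif_pos hsd]
      rw [h0 ⟨s, hsd⟩ hs]; ring
    · simp only [hG, hH, dif_pos t.isLt]
      have : (⟨t.val, t.isLt⟩ : Fin d) = t := rfl
      rw [this]; linarith
    · intro s
      by_cases hsd : s < d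
      · simp only [hG, hH, dif_pos hsd]
        have := h2 ⟨s, hsd⟩; linarith
      · simp [hG, hH, hsd]
  have : ∑ s ∈ Finset.range d, (G s - H s) * 4^(d-1-s)
      = ∑ s ∈ Finset.range d, G s * 4^(d-1-s) - ∑ s ∈ Finset.range d, H s * 4^(d-1-s) := by
    rw [← Finset.sum_sub_distrib]
    apply Finset.sum_congr rfl; intros; ring
  rw [hg, hh]; linarith [this ▸ key]

/-- Two distinct elements of a finite up-comb split at some coordinate. -/
lemma upPair {d : ℕ} {S : Set (Fin d → Sq)} (h : FinUpComb S) :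
    ∀ α ∈ S, ∀ β ∈ S, α ≠ β → ∃ t : Fin d, (∀ s, s < t → α s = β s) ∧
      (α t).1 = (β t).1 ∧
      (((α t).2 = 0 ∧ (β t).2 = 1) ∨ ((α t).2 = 1 ∧ (β t).2 = 0)) := by
  induction h with
  | single γ =>
    intro α hα β hβ hne
    exact absurd (hα.trans hβ.symm) hne
  | union hA hB hN ihA ihB =>
    intro α hα β hβ hne
    obtain ⟨t, τ, i, hA', hB'⟩ := hN
    rcases hα with hαA | hαB <;> rcases hβ with hβA | hβB
    · exact ihA α hαA β hβA hne
    · obtain ⟨ha1, ha2⟩ := hA' α hαA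
      obtain ⟨hb1, hb2⟩ := hB' β hβB
      refine ⟨t, fun s hs => (ha1 s hs).trans (hb1 s hs).symm, ?_, Or.inl ?_⟩
      · rw [ha2, hb2]
      · rw [ha2, hb2]; exact ⟨rfl, rfl⟩
    · obtain ⟨ha1, ha2⟩ := hA' β hβA
      obtain ⟨hb1, hb2⟩ := hB' α hαB
      refine ⟨t, fun s hs => (hb1 s hs).trans (ha1 s hs).symm, ?_, Or.inr ?_⟩
      · rw [ha2, hb2]
      · rw [ha2, hb2]; exact ⟨rfl, rfl⟩
    · exact ihB α hαB β hβB hne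

/-- Two distinct elements of a finite right-comb split at some coordinate. -/
lemma rightPair {d : ℕ} {S : Set (Fin d → Sq)} (h : FinRightComb S) :
    ∀ α ∈ S, ∀ β ∈ S, α ≠ β → ∃ t : Fin d, (∀ s, s < t → α s = β s) ∧
      (α t).2 = (β t).2 ∧
      (((α t).1 = 0 ∧ (β t).1 = 1) ∨ ((α t).1 = 1 ∧ (β t).1 = 0)) := by
  induction h with
  | single γ =>
    intro α hα β hβ hne
    exact absurd (hα.trans hβ.symm) hne
  | union hA hB hN ihA ihB =>
    intro α hα β hβ hne
    obtain ⟨t, τ, j, hA', hB'⟩ := hN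
    rcases hα with hαA | hαB <;> rcases hβ with hβA | hβB
    · exact ihA α hαA β hβA hne
    · obtain ⟨ha1, ha2⟩ := hA' α hαA
      obtain ⟨hb1, hb2⟩ := hB' β hβB
      refine ⟨t, fun s hs => (ha1 s hs).trans (hb1 s hs).symm, ?_, Or.inl ?_⟩
      · rw [ha2, hb2]
      · rw [ha2, hb2]; exact ⟨rfl, rfl⟩
    · obtain ⟨ha1, ha2⟩ := hA' β hβA
      obtain ⟨hb1, hb2⟩ := hB' α hαB
      refine ⟨t, fun s hs => (hb1 s hs).trans (ha1 s hs).symm, ?_, Or.inr ?_⟩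
      · rw [ha2, hb2]
      · rw [ha2, hb2]; exact ⟨rfl, rfl⟩
    · exact ihB α hαB β hβB hne

/-- First digit map. -/
def ux (p : Sq) : ℤ := (p.1 : ℤ) + (p.2 : ℤ)
/-- Second digit map. -/
def vy (p : Sq) : ℤ := 2 * (p.1 : ℤ) + 1 - (p.2 : ℤ)

lemma ux_range (p : Sq) : 0 ≤ ux p ∧ ux p ≤ 2 := by
  rcases p with ⟨a, b⟩
  fin_cases a <;> fin_cases b <;> simp [ux]
lemma vy_range (p : Sq) : 0 ≤ vy p ∧ vy p ≤ 3 := by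
  rcases p with ⟨a, b⟩
  fin_cases a <;> fin_cases b <;> simp [vy]

/-- For every `d` there is a map `(2²)^d → ℤ²` sending up-ω-combs to antichains
and right-ω-combs to strict chains (in the product order on `ℤ²`). -/
theorem stmt_9 (d : ℕ) :
    ∃ f : (Fin d → Sq) → ℤ × ℤ,
      (∀ C : Set (Fin d → Sq), UpComb C → IsAntichain (· ≤ ·) (f '' C)) ∧
      (∀ C : Set (Fin d → Sq), RightComb C →
        ∀ a ∈ f '' C, ∀ b ∈ f '' C, a ≠ b → a < b ∨ b < a) := by
  refine ⟨fun α => (dsum (fun i => ux (α i)), dsum (fun i => vy (α i))), ?_, ?_⟩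
  · intro C hC a ha b hb hab hle
    obtain ⟨α, hαC, rfl⟩ := ha
    obtain ⟨β, hβC, rfl⟩ := hb
    have hne : α ≠ β := fun h => hab (by rw [h])
    have hpair : FinUpComb {α, β} := by
      apply hC {α, β}
      · intro x hx; rcases hx with rfl | rfl; exacts [hαC, hβC]
      · exact (Set.finite_singleton β).insert α
      · exact ⟨α, Or.inl rfl⟩
    obtain ⟨t, hlow, hfst, hcase⟩ := upPair hpair α (Or.inl rfl) β (Or.inr rfl) hne
    rcases hcase with ⟨h1, h2⟩ | ⟨h1, h2⟩
    · -- α below: vy (α t) > vy (β t), so second coordinates violate ≤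
      have : dsum (fun i => vy (β i)) < dsum (fun i => vy (α i)) := by
        apply dsum_lt _ _ t
        · intro s hs; rw [hlow s hs]
        · simp only [vy, hfst, h1, h2]; norm_num
        · intro s
          have := (vy_range (α s)).1; have := (vy_range (β s)).2; linarith
      exact absurd hle.2 (not_le.mpr this)
    · -- α on second branch: ux (α t) > ux (β t), first coordinates violate ≤
      have : dsum (fun i => ux (β i)) < dsum (fun i => ux (α i)) := by
        apply dsum_lt _ _ t
        · intro s hs; rw [hlow s hs]
        · simp only [ux, hfst, h1, h2]; norm_num
        · intro s
          have := (ux_range (α s)).1; have := (ux_range (β s)).2; linarith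
      exact absurd hle.1 (not_le.mpr this)
  · intro C hC a ha b hb hab
    obtain ⟨α, hαC, rfl⟩ := ha
    obtain ⟨β, hβC, rfl⟩ := hb
    have hne : α ≠ β := fun h => hab (by rw [h])
    have hpair : FinRightComb {α, β} := by
      apply hC {α, β}
      · intro x hx; rcases hx with rfl | rfl; exacts [hαC, hβC]
      · exact (Set.finite_singleton β).insert α
      · exact ⟨α, Or.inl rfl⟩
    obtain ⟨t, hlow, hsnd, hcase⟩ := rightPair hpair α (Or.inl rfl) β (Or.inr rfl) hne
    have keyx : ∀ (γ δ : Fin d → Sq), (∀ s, s < t → γ s = δ s) →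
        (γ t).1 = 0 → (δ t).1 = 1 → (γ t).2 = (δ t).2 →
        dsum (fun i => ux (γ i)) < dsum (fun i => ux (δ i)) := by
      intro γ δ hl h1 h2 hs2
      apply dsum_lt _ _ t
      · intro s hs; rw [hl s hs]
      · simp only [ux, h1, h2, hs2]; omega
      · intro s
        have := (ux_range (δ s)).1; have := (ux_range (γ s)).2; linarith
    have keyy : ∀ (γ δ : Fin d → Sq), (∀ s, s < t → γ s = δ s) →
        (γ t).1 = 0 → (δ t).1 = 1 → (γ t).2 = (δ t).2 →
        dsum (fun i => vy (γ i)) < dsum (fun i => vy (δ i)) := by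
      intro γ δ hl h1 h2 hs2
      apply dsum_lt _ _ t
      · intro s hs; rw [hl s hs]
      · simp only [vy, h1, h2, hs2]; omega
      · intro s
        have := (vy_range (δ s)).1; have := (vy_range (γ s)).2; linarith
    rcases hcase with ⟨h1, h2⟩ | ⟨h1, h2⟩
    · left
      exact Prod.mk_lt_mk.mpr (Or.inl ⟨keyx α β hlow h1 h2 hsnd,
        le_of_lt (keyy α β hlow h1 h2 hsnd)⟩)
    · right
      have hlow' : ∀ s, s < t → β s = α s := fun s hs => (hlow s hs).symm
      exact Prod.mk_lt_mk.mpr (Or.inl ⟨keyx β α hlow' h2 h1 hsnd.symm,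
        le_of_lt (keyy β α hlow' h2 h1 hsnd.symm)⟩)
end
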